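/- arXiv:2303.10246 — 3 statements merged into one kernel-verified Lean document; each statement's English description precedes it below -/
import Mathlib

section
/- Let n ≥ 1, let Ω ⊆ ℂⁿ be a bounded open set, let f : Ω → ℂ be holomorphic, and suppose there exists C > 0 such that for every p ∈ Ω, writing δ_p = dist(p, ∂Ω), one has f^♯(z) ≤ √C · δ_p / (δ_p² − ‖z − p‖²) for every z with ‖z − p‖ < δ_p. Let (p_j) be a sequence in Ω and (r_j) a sequence of positive reals with r_j / δ_{p_j} → 0, and suppose the functions g_j(ζ) = f(p_j + r_j·ζ) (each defined on the ball ‖ζ‖ < δ_{p_j}/r_j) converge, uniformly on every compact subset of ℂⁿ, to a function g : ℂⁿ → ℂ. Then g is constant. -/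
/-! On the half ball `‖z - p‖ ≤ δ_p / 2` the hypothesis bounds `f^♯` by `(4/3)·√C / δ_p`.
Fix `ζ`; as a locally uniform limit of continuous functions, `g` is bounded on the ball
`‖w‖ ≤ ‖ζ‖`, hence so are the `g_j` for large `j`, and the bound on `f^♯` becomes a bound
`‖Df‖ = O(1/δ_{p_j})` on the segment from `p_j` to `p_j + r_j·ζ`. By the mean value theorem
`‖g_j(ζ) - g_j(0)‖ = O(r_j / δ_{p_j}) → 0`, so `g(ζ) = g(0)`. -/

open Filter Metric Topology

noncomputable def sphericalDeriv {n : ℕ} (f : EuclideanSpace ℂ (Fin n) → ℂ)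
    (z : EuclideanSpace ℂ (Fin n)) : ℝ :=
  ‖fderiv ℂ f z‖ / (1 + ‖f z‖ ^ 2)

lemma image_add_smul_closedBall_zero {E : Type*} [NormedAddCommGroup E] [NormedSpace ℝ E]
    (q : E) {s ρ : ℝ} (hs : 0 < s) (hρ : 0 ≤ ρ) :
    (fun w => q + s • w) '' closedBall (0 : E) ρ = closedBall q (s * ρ) := by
  have hsmul := smul_closedBall s (0 : E) hρ
  have hvadd := vadd_closedBall q (0 : E) (‖s‖ * ρ)
  rw [← Set.image_smul, smul_zero] at hsmul
  rw [← Set.image_vadd, vadd_eq_add, add_zero] at hvadd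
  rw [Real.norm_of_nonneg hs.le] at hsmul hvadd
  rw [← hvadd, ← hsmul, Set.image_image]
  rfl

lemma TendstoUniformlyOn.eventually_norm_le_add_one {ι α E : Type*} [SeminormedAddCommGroup E]
    {F : ι → α → E} {g : α → E} {l : Filter ι} {K : Set α} (h : TendstoUniformlyOn F g l K)
    {B : ℝ} (hB : ∀ x ∈ K, ‖g x‖ ≤ B) : ∀ᶠ i in l, ∀ x ∈ K, ‖F i x‖ ≤ B + 1 := by
  filter_upwards [Metric.tendstoUniformlyOn_iff.mp h 1 one_pos] with i hi x hx
  calc ‖F i x‖ ≤ ‖g x‖ + ‖F i x - g x‖ := norm_le_norm_add_norm_sub' _ _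
    _ ≤ B + 1 := by
      rw [← dist_eq_norm, dist_comm]
      exact add_le_add (hB x hx) (hi x hx).le

lemma eventually_mul_le_half_of_tendsto_div {ι : Type*} {l : Filter ι} {r δ : ι → ℝ}
    (hδ : ∀ i, 0 < δ i) (h : Tendsto (fun i => r i / δ i) l (𝓝 0)) (c : ℝ) :
    ∀ᶠ i in l, r i * c ≤ δ i / 2 := by
  have hc : Tendsto (fun i => r i / δ i * c) l (𝓝 0) := by simpa using h.mul_const c
  filter_upwards [hc.eventually (ge_mem_nhds (by norm_num : (0 : ℝ) < 1 / 2))] with i hi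
  rw [div_mul_eq_mul_div, div_le_iff₀ (hδ i)] at hi
  linarith

lemma mul_div_sq_sub_sq_le {a δ t : ℝ} (ha : 0 ≤ a) (hδ : 0 < δ) (ht₀ : 0 ≤ t)
    (ht : t ≤ δ / 2) : a * δ / (δ ^ 2 - t ^ 2) ≤ 4 / 3 * a / δ := by
  have hden : 3 / 4 * δ ^ 2 ≤ δ ^ 2 - t ^ 2 := by nlinarith
  rw [div_le_div_iff₀ (by nlinarith) hδ]
  nlinarith [mul_le_mul_of_nonneg_left hden ha]

section SphericalDerivative

variable {n : ℕ} {f : EuclideanSpace ℂ (Fin n) → ℂ}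

lemma sphericalDeriv_nonneg (z : EuclideanSpace ℂ (Fin n)) : 0 ≤ sphericalDeriv f z := by
  unfold sphericalDeriv
  positivity

lemma norm_fderiv_le_of_sphericalDeriv_le {z : EuclideanSpace ℂ (Fin n)} {s R : ℝ}
    (hs : sphericalDeriv f z ≤ s) (hR : ‖f z‖ ≤ R) : ‖fderiv ℂ f z‖ ≤ (1 + R ^ 2) * s := by
  have hpos : 0 < 1 + ‖f z‖ ^ 2 := by positivity
  calc ‖fderiv ℂ f z‖ = (1 + ‖f z‖ ^ 2) * sphericalDeriv f z := by
        rw [sphericalDeriv, mul_div_cancel₀ _ hpos.ne']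
    _ ≤ (1 + R ^ 2) * s := by
      have := sphericalDeriv_nonneg (f := f) z
      gcongr

lemma norm_apply_add_sub_le_of_sphericalDeriv_le {p v : EuclideanSpace ℂ (Fin n)} {a δ R : ℝ}
    (ha : 0 ≤ a) (hδ : 0 < δ) (hv : ‖v‖ ≤ δ / 2) (hf : DifferentiableOn ℂ f (ball p δ))
    (hbound : ∀ z, ‖z - p‖ < δ → sphericalDeriv f z ≤ a * δ / (δ ^ 2 - ‖z - p‖ ^ 2))
    (hR : ∀ z ∈ closedBall p ‖v‖, ‖f z‖ ≤ R) :
    ‖f (p + v) - f p‖ ≤ (1 + R ^ 2) * (4 / 3 * a / δ) * ‖v‖ := by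
  have hsub : closedBall p ‖v‖ ⊆ ball p δ := closedBall_subset_ball (by linarith [norm_nonneg v])
  have hderiv : ∀ z ∈ closedBall p ‖v‖, ‖fderiv ℂ f z‖ ≤ (1 + R ^ 2) * (4 / 3 * a / δ) := by
    intro z hz
    have hzp : ‖z - p‖ ≤ ‖v‖ := by rwa [mem_closedBall, dist_eq_norm] at hz
    refine norm_fderiv_le_of_sphericalDeriv_le ((hbound z (by linarith)).trans ?_) (hR z hz)
    exact mul_div_sq_sub_sq_le ha hδ (norm_nonneg _) (hzp.trans hv)
  simpa using (convex_closedBall p ‖v‖).norm_image_sub_le_of_norm_fderiv_le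
    (fun z hz => hf.differentiableAt (isOpen_ball.mem_nhds (hsub hz))) hderiv
    (mem_closedBall_self (norm_nonneg v))
    (show p + v ∈ closedBall p ‖v‖ by simp [mem_closedBall, dist_eq_norm])

lemma continuousOn_comp_add_smul {q : EuclideanSpace ℂ (Fin n)} {δ s ρ : ℝ}
    (hf : DifferentiableOn ℂ f (ball q δ)) (hs : 0 < s) (hρ : 0 ≤ ρ) (hsρ : s * ρ < δ) :
    ContinuousOn (fun w => f (q + s • w)) (closedBall 0 ρ) := by
  refine hf.continuousOn.comp (by fun_prop) fun w hw => closedBall_subset_ball hsρ ?_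
  rw [← image_add_smul_closedBall_zero q hs hρ]
  exact Set.mem_image_of_mem _ hw

lemma norm_comp_add_smul_sub_le {q ζ : EuclideanSpace ℂ (Fin n)} {a δ s R : ℝ}
    (ha : 0 ≤ a) (hδ : 0 < δ) (hs : 0 < s) (hsζ : s * ‖ζ‖ ≤ δ / 2)
    (hf : DifferentiableOn ℂ f (ball q δ))
    (hbound : ∀ z, ‖z - q‖ < δ → sphericalDeriv f z ≤ a * δ / (δ ^ 2 - ‖z - q‖ ^ 2))
    (hR : ∀ w ∈ closedBall 0 ‖ζ‖, ‖f (q + s • w)‖ ≤ R) :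
    ‖f (q + s • ζ) - f (q + s • 0)‖ ≤ (1 + R ^ 2) * (4 / 3 * a) * ‖ζ‖ * (s / δ) := by
  have hv : ‖s • ζ‖ = s * ‖ζ‖ := by rw [norm_smul, Real.norm_of_nonneg hs.le]
  have hR' : ∀ z ∈ closedBall q ‖s • ζ‖, ‖f z‖ ≤ R := by
    rw [hv, ← image_add_smul_closedBall_zero q hs (norm_nonneg ζ)]
    rintro _ ⟨w, hw, rfl⟩
    exact hR w hw
  rw [smul_zero, add_zero]
  calc ‖f (q + s • ζ) - f q‖ ≤ (1 + R ^ 2) * (4 / 3 * a / δ) * ‖s • ζ‖ :=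
        norm_apply_add_sub_le_of_sphericalDeriv_le ha hδ (hv ▸ hsζ) hf hbound hR'
    _ = (1 + R ^ 2) * (4 / 3 * a) * ‖ζ‖ * (s / δ) := by rw [hv]; ring

end SphericalDerivative

theorem limit_of_rescalings_const_general
    (n : ℕ) (Ω : Set (EuclideanSpace ℂ (Fin n)))
    (hΩopen : IsOpen Ω) (hΩbdd : Bornology.IsBounded Ω)
    (f : EuclideanSpace ℂ (Fin n) → ℂ) (hf : DifferentiableOn ℂ f Ω)
    (C : ℝ)
    (hbound : ∀ p ∈ Ω, ∀ z : EuclideanSpace ℂ (Fin n),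
      ‖z - p‖ < infDist p Ωᶜ →
        sphericalDeriv f z ≤
          Real.sqrt C * infDist p Ωᶜ / ((infDist p Ωᶜ) ^ 2 - ‖z - p‖ ^ 2))
    (p : ℕ → EuclideanSpace ℂ (Fin n)) (hp : ∀ j, p j ∈ Ω)
    (r : ℕ → ℝ) (hr : ∀ j, 0 < r j)
    (hratio : Tendsto (fun j => r j / infDist (p j) Ωᶜ) atTop (nhds 0))
    (g : EuclideanSpace ℂ (Fin n) → ℂ)
    (hconv : ∀ K : Set (EuclideanSpace ℂ (Fin n)), IsCompact K →
      TendstoUniformlyOn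
        (fun j (ζ : EuclideanSpace ℂ (Fin n)) => f (p j + r j • ζ)) g atTop K) :
    ∃ c : ℂ, ∀ ζ : EuclideanSpace ℂ (Fin n), g ζ = c := by
  obtain hE | hE := subsingleton_or_nontrivial (EuclideanSpace ℂ (Fin n))
  · exact ⟨g 0, fun ζ => congrArg g (Subsingleton.elim ζ 0)⟩
  have hΩc : Ωᶜ.Nonempty :=
    Set.nonempty_compl.2 fun h => NormedSpace.unbounded_univ ℂ _ (h ▸ hΩbdd)
  have hδ : ∀ j, 0 < infDist (p j) Ωᶜ := fun j =>
    (hΩopen.isClosed_compl.notMem_iff_infDist_pos hΩc).1 (not_not.2 (hp j))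
  have hfball : ∀ j, DifferentiableOn ℂ f (ball (p j) (infDist (p j) Ωᶜ)) := fun j =>
    hf.mono ball_infDist_compl_subset
  refine ⟨g 0, fun ζ => ?_⟩
  have hK := hconv _ (isCompact_closedBall 0 ‖ζ‖)
  have hsmall := eventually_mul_le_half_of_tendsto_div hδ hratio ‖ζ‖
  have hcont := hsmall.mono fun j hj =>
    continuousOn_comp_add_smul (hfball j) (hr j) (norm_nonneg ζ) (hj.trans_lt (half_lt_self (hδ j)))
  obtain ⟨B, hB⟩ := (isCompact_closedBall _ _).exists_bound_of_continuousOn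
    (hK.continuousOn hcont.frequently)
  set A := (1 + (B + 1) ^ 2) * (4 / 3 * Real.sqrt C) * ‖ζ‖
  have hkey : ∀ᶠ j in atTop,
      ‖f (p j + r j • ζ) - f (p j + r j • 0)‖ ≤ A * (r j / infDist (p j) Ωᶜ) := by
    filter_upwards [hsmall, hK.eventually_norm_le_add_one hB] with j hj hbdd
    exact norm_comp_add_smul_sub_le (Real.sqrt_nonneg C) (hδ j) (hr j) hj (hfball j)
      (hbound (p j) (hp j)) hbdd
  have hlim := (hK.tendsto_at (mem_closedBall_zero_iff.2 le_rfl)).sub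
    (hK.tendsto_at (mem_closedBall_self (norm_nonneg ζ)))
  have hlim₀ := squeeze_zero_norm' hkey (by simpa using hratio.const_mul A)
  exact sub_eq_zero.1 (tendsto_nhds_unique hlim hlim₀)

/-- Let `Ω ⊆ ℂⁿ` be a bounded open set and `f` holomorphic on `Ω` satisfying, for some
`C > 0`, the bound `f^♯(z) ≤ √C·δ_p/(δ_p² − ‖z−p‖²)` on each ball `B(p, δ_p) ⊆ Ω`, with
`δ_p = dist(p, ∂Ω)`.  If `p_j ∈ Ω`, `r_j > 0` with `r_j/δ_{p_j} → 0`, and the rescaled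
functions `g_j(ζ) = f(p_j + r_j·ζ)` converge uniformly on every compact subset of `ℂⁿ`
to `g : ℂⁿ → ℂ`, then `g` is constant. -/
theorem limit_of_rescalings_const
    (n : ℕ) (hn : 1 ≤ n) (Ω : Set (EuclideanSpace ℂ (Fin n)))
    (hΩopen : IsOpen Ω) (hΩbdd : Bornology.IsBounded Ω)
    (f : EuclideanSpace ℂ (Fin n) → ℂ) (hf : DifferentiableOn ℂ f Ω)
    (C : ℝ) (hC : 0 < C)
    (hbound : ∀ p ∈ Ω, ∀ z : EuclideanSpace ℂ (Fin n),
      ‖z - p‖ < infDist p Ωᶜ →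
        sphericalDeriv f z ≤
          Real.sqrt C * infDist p Ωᶜ / ((infDist p Ωᶜ) ^ 2 - ‖z - p‖ ^ 2))
    (p : ℕ → EuclideanSpace ℂ (Fin n)) (hp : ∀ j, p j ∈ Ω)
    (r : ℕ → ℝ) (hr : ∀ j, 0 < r j)
    (hratio : Tendsto (fun j => r j / infDist (p j) Ωᶜ) atTop (nhds 0))
    (g : EuclideanSpace ℂ (Fin n) → ℂ)
    (hconv : ∀ K : Set (EuclideanSpace ℂ (Fin n)), IsCompact K →
      TendstoUniformlyOn
        (fun j (ζ : EuclideanSpace ℂ (Fin n)) => f (p j + r j • ζ)) g atTop K) :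
    ∃ c : ℂ, ∀ ζ : EuclideanSpace ℂ (Fin n), g ζ = c :=
  limit_of_rescalings_const_general n Ω hΩopen hΩbdd f hf C hbound p hp r hr hratio g hconv
end

section
/- Let n ≥ 1 and let 𝔹ⁿ be the open unit ball of ℂⁿ. Let f : 𝔹ⁿ → ℂ be a normal holomorphic function, i.e., there exists C > 0 such that |Df(z)v| / (1 + |f(z)|²) ≤ C · √((1−‖z‖²)‖v‖² + |⟨z,v⟩|²)/(1−‖z‖²) for all z ∈ 𝔹ⁿ and v ∈ ℂⁿ. Let (p_j) be a sequence in 𝔹ⁿ and (r_j) positive reals with r_j / (1 − ‖p_j‖) → 0, and suppose the functions g_j(ζ) = f(p_j + r_j·ζ) converge, uniformly on every compact subset of ℂⁿ, to a function g : ℂⁿ → ℂ. Then g is constant. -/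
open Filter Metric Topology

/-!
On the complex line through a point `ζ`, the rescalings `w ↦ f (p_j + r_j w ζ)` are holomorphic
on any fixed disc for large `j`, with derivatives `Df(z_j)(r_j ζ)` at `z_j = p_j + r_j w ζ`.
By Cauchy–Schwarz the Kobayashi metric satisfies `K(z, v) ≤ ‖v‖ / (1 - ‖z‖)`; since `z_j` stays
at distance at least `(1 - ‖p_j‖)/2` from the sphere and the values `f(z_j)` converge, normality
bounds these derivatives by a constant times `r_j / (1 - ‖p_j‖) → 0`. By Weierstrass' theorem the
derivative of the limit `w ↦ g (w ζ)` is the limit of the derivatives, hence zero, so `g` is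
constant on every complex line through the origin.
-/

section Normal

variable {E : Type*} [NormedAddCommGroup E] [InnerProductSpace ℂ E]

def IsNormalWithConst (C : ℝ) (f : E → ℂ) : Prop :=
  ∀ z ∈ ball (0 : E) 1, ∀ v : E,
    ‖fderiv ℂ f z v‖ / (1 + ‖f z‖ ^ 2) ≤
      C * Real.sqrt ((1 - ‖z‖ ^ 2) * ‖v‖ ^ 2 + ‖(inner ℂ z v : ℂ)‖ ^ 2) / (1 - ‖z‖ ^ 2)

theorem sqrt_kobayashi_numerator_le {𝕜 F : Type*} [RCLike 𝕜] [NormedAddCommGroup F]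
    [InnerProductSpace 𝕜 F] (z v : F) :
    Real.sqrt ((1 - ‖z‖ ^ 2) * ‖v‖ ^ 2 + ‖(inner 𝕜 z v : 𝕜)‖ ^ 2) ≤ ‖v‖ := by
  have hinner : ‖(inner 𝕜 z v : 𝕜)‖ ^ 2 ≤ ‖z‖ ^ 2 * ‖v‖ ^ 2 := by
    rw [← mul_pow]
    exact pow_le_pow_left₀ (norm_nonneg _) (norm_inner_le_norm z v) 2
  exact Real.sqrt_le_iff.mpr ⟨norm_nonneg v, by nlinarith⟩

theorem IsNormalWithConst.norm_fderiv_le {C : ℝ} {f : E → ℂ} (hnormal : IsNormalWithConst C f)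
    (hC : 0 ≤ C) {z : E} (hz : ‖z‖ < 1) (v : E) :
    ‖fderiv ℂ f z v‖ ≤ C * (1 + ‖f z‖ ^ 2) * ‖v‖ / (1 - ‖z‖) := by
  have hgap : 0 < 1 - ‖z‖ := sub_pos.mpr hz
  have hgap_sq : 1 - ‖z‖ ≤ 1 - ‖z‖ ^ 2 := by nlinarith [norm_nonneg z]
  have hkob : C * Real.sqrt ((1 - ‖z‖ ^ 2) * ‖v‖ ^ 2 + ‖(inner ℂ z v : ℂ)‖ ^ 2) / (1 - ‖z‖ ^ 2)
      ≤ C * ‖v‖ / (1 - ‖z‖) :=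
    div_le_div₀ (by positivity)
      (mul_le_mul_of_nonneg_left (sqrt_kobayashi_numerator_le z v) hC) hgap hgap_sq
  have hbound := (div_le_iff₀ (by positivity)).mp
    ((hnormal z (mem_ball_zero_iff.mpr hz) v).trans hkob)
  calc ‖fderiv ℂ f z v‖ ≤ C * ‖v‖ / (1 - ‖z‖) * (1 + ‖f z‖ ^ 2) := hbound
    _ = C * (1 + ‖f z‖ ^ 2) * ‖v‖ / (1 - ‖z‖) := by ring

theorem IsNormalWithConst.tendsto_fderiv_zero {ι : Type*} {l : Filter ι} {C : ℝ} {f : E → ℂ}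
    (hnormal : IsNormalWithConst C f) (hC : 0 ≤ C) {z v : ι → E} {d : ι → ℝ} {a : ℂ}
    (hd : ∀ᶠ j in l, 0 < d j ∧ d j ≤ 1 - ‖z j‖)
    (hv : Tendsto (fun j => ‖v j‖ / d j) l (𝓝 0))
    (hfz : Tendsto (fun j => f (z j)) l (𝓝 a)) :
    Tendsto (fun j => fderiv ℂ f (z j) (v j)) l (𝓝 0) := by
  have hbound : ∀ᶠ j in l,
      ‖fderiv ℂ f (z j) (v j)‖ ≤ C * (1 + ‖f (z j)‖ ^ 2) * (‖v j‖ / d j) := by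
    filter_upwards [hd] with j ⟨hd_pos, hd_le⟩
    calc ‖fderiv ℂ f (z j) (v j)‖
        ≤ C * (1 + ‖f (z j)‖ ^ 2) * ‖v j‖ / (1 - ‖z j‖) :=
          hnormal.norm_fderiv_le hC (by linarith) (v j)
      _ ≤ C * (1 + ‖f (z j)‖ ^ 2) * ‖v j‖ / d j :=
          div_le_div_of_nonneg_left (by positivity) hd_pos hd_le
      _ = C * (1 + ‖f (z j)‖ ^ 2) * (‖v j‖ / d j) := mul_div_assoc _ _ _
  have hlim := ((hfz.norm.pow 2).const_add 1).const_mul C |>.mul hv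
  rw [mul_zero] at hlim
  exact squeeze_zero_norm' hbound hlim

end Normal

section Lines

variable {E : Type*} [NormedAddCommGroup E] [NormedSpace ℂ E]

theorem hasDerivAt_comp_add_smul {F : Type*} [NormedAddCommGroup F] [NormedSpace ℂ F]
    {f : E → F} {p u : E} {w : ℂ} (hf : DifferentiableAt ℂ f (p + w • u)) :
    HasDerivAt (fun w : ℂ => f (p + w • u)) (fderiv ℂ f (p + w • u) u) w := by
  have hline := ((hasDerivAt_id' w).smul_const u).const_add p
  rw [one_smul] at hline
  exact hf.hasFDerivAt.comp_hasDerivAt w hline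

theorem eventually_half_le_one_sub_norm_add_smul {ι : Type*} {l : Filter ι} {p u : ι → E}
    (hp : ∀ j, ‖p j‖ < 1) (hu : Tendsto (fun j => ‖u j‖ / (1 - ‖p j‖)) l (𝓝 0)) (R : ℝ) :
    ∀ᶠ j in l, ∀ w : ℂ, ‖w‖ ≤ R → (1 - ‖p j‖) / 2 ≤ 1 - ‖p j + w • u j‖ := by
  have hsmall : ∀ᶠ j in l, ‖u j‖ / (1 - ‖p j‖) * R < 1 / 2 :=
    (hu.mul_const R).eventually (gt_mem_nhds (by norm_num))
  filter_upwards [hsmall] with j hj w hw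
  have hgap : 0 < 1 - ‖p j‖ := sub_pos.mpr (hp j)
  have hstep : ‖w • u j‖ ≤ (1 - ‖p j‖) / 2 := by
    rw [norm_smul]
    rw [div_mul_eq_mul_div, div_lt_iff₀ hgap] at hj
    nlinarith [norm_nonneg (u j)]
  linarith [norm_add_le (p j) (w • u j)]

end Lines

theorem IsNormalWithConst.isConst_of_tendstoLocallyUniformly {E : Type*} [NormedAddCommGroup E]
    [InnerProductSpace ℂ E] {C : ℝ} {f : E → ℂ} (hnormal : IsNormalWithConst C f) (hC : 0 ≤ C)
    (hf : DifferentiableOn ℂ f (ball 0 1)) {p u : ℕ → E} (hp : ∀ j, ‖p j‖ < 1)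
    (hu : Tendsto (fun j => ‖u j‖ / (1 - ‖p j‖)) atTop (𝓝 0)) {G : ℂ → ℂ}
    (hG : TendstoLocallyUniformly (fun j (w : ℂ) => f (p j + w • u j)) G atTop) (w : ℂ) :
    G w = G 0 := by
  set U := ball (0 : ℂ) (‖w‖ + 1)
  have hGU : TendstoLocallyUniformlyOn (fun j (w : ℂ) => f (p j + w • u j)) G atTop U :=
    hG.tendstoLocallyUniformlyOn
  have hgap : ∀ᶠ j in atTop, ∀ w' ∈ U,
      0 < (1 - ‖p j‖) / 2 ∧ (1 - ‖p j‖) / 2 ≤ 1 - ‖p j + w' • u j‖ := by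
    filter_upwards [eventually_half_le_one_sub_norm_add_smul hp hu (‖w‖ + 1)] with j hj w' hw'
    exact ⟨by linarith [hp j], hj w' (mem_ball_zero_iff.mp hw').le⟩
  have hderiv : ∀ᶠ j in atTop, ∀ w' ∈ U,
      HasDerivAt (fun w : ℂ => f (p j + w • u j)) (fderiv ℂ f (p j + w' • u j) (u j)) w' := by
    filter_upwards [hgap] with j hj w' hw'
    have hmem : p j + w' • u j ∈ ball (0 : E) 1 := by
      rw [mem_ball_zero_iff]
      linarith [hj w' hw']
    exact hasDerivAt_comp_add_smul (hf.differentiableAt (isOpen_ball.mem_nhds hmem))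
  have hdiff : ∀ᶠ j in atTop, DifferentiableOn ℂ (fun w : ℂ => f (p j + w • u j)) U :=
    hderiv.mono fun j hj w' hw' => (hj w' hw').differentiableAt.differentiableWithinAt
  have hderivG : Set.EqOn (deriv G) 0 U := by
    intro w' hw'
    refine tendsto_nhds_unique ((hGU.deriv hdiff isOpen_ball).tendsto_at hw') ?_
    have hv : Tendsto (fun j => ‖u j‖ / ((1 - ‖p j‖) / 2)) atTop (𝓝 0) := by
      simpa only [mul_zero] using (hu.const_mul 2).congr fun j => by rw [div_div_eq_mul_div]; ring
    refine (hnormal.tendsto_fderiv_zero hC (hgap.mono fun j hj => hj w' hw') hv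
      (hGU.tendsto_at hw')).congr' ?_
    filter_upwards [hderiv] with j hj using (hj w' hw').deriv.symm
  exact isOpen_ball.is_const_of_deriv_eq_zero (convex_ball _ _).isPreconnected
    (hGU.differentiableOn hdiff isOpen_ball) hderivG
    (mem_ball_zero_iff.mpr (lt_add_one _)) (mem_ball_self (by positivity))

theorem limit_of_rescalings_of_normal_const_general
    (n : ℕ)
    (f : EuclideanSpace ℂ (Fin n) → ℂ)
    (hf : DifferentiableOn ℂ f (ball (0 : EuclideanSpace ℂ (Fin n)) 1))
    (C : ℝ) (hC : 0 < C)
    (hnormal : ∀ z ∈ ball (0 : EuclideanSpace ℂ (Fin n)) 1,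
      ∀ v : EuclideanSpace ℂ (Fin n),
        ‖fderiv ℂ f z v‖ / (1 + ‖f z‖ ^ 2) ≤
          C * Real.sqrt ((1 - ‖z‖ ^ 2) * ‖v‖ ^ 2 + ‖(inner ℂ z v : ℂ)‖ ^ 2) /
            (1 - ‖z‖ ^ 2))
    (p : ℕ → EuclideanSpace ℂ (Fin n))
    (hp : ∀ j, p j ∈ ball (0 : EuclideanSpace ℂ (Fin n)) 1)
    (r : ℕ → ℝ)
    (hratio : Tendsto (fun j => r j / (1 - ‖p j‖)) atTop (nhds 0))
    (g : EuclideanSpace ℂ (Fin n) → ℂ)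
    (hconv : ∀ K : Set (EuclideanSpace ℂ (Fin n)), IsCompact K →
      TendstoUniformlyOn
        (fun j (ζ : EuclideanSpace ℂ (Fin n)) => f (p j + r j • ζ)) g atTop K) :
    ∃ c : ℂ, ∀ ζ : EuclideanSpace ℂ (Fin n), g ζ = c := by
  refine ⟨g 0, fun ζ => ?_⟩
  have hp' : ∀ j, ‖p j‖ < 1 := fun j => mem_ball_zero_iff.mp (hp j)
  have hu : Tendsto (fun j => ‖r j • ζ‖ / (1 - ‖p j‖)) atTop (𝓝 0) := by
    have hlim := hratio.norm.mul_const ‖ζ‖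
    rw [norm_zero, zero_mul] at hlim
    refine hlim.congr fun j => ?_
    rw [norm_smul, norm_div, Real.norm_of_nonneg (sub_pos.mpr (hp' j)).le, div_mul_eq_mul_div]
  have hline : TendstoLocallyUniformly (fun j (w : ℂ) => f (p j + w • (r j • ζ)))
      (fun w : ℂ => g (w • ζ)) atTop := by
    have := (tendstoLocallyUniformly_iff_forall_isCompact.mpr hconv).comp (fun w : ℂ => w • ζ)
      (continuous_id.smul continuous_const)
    simpa only [Function.comp_def, smul_comm (r _)] using this
  simpa using IsNormalWithConst.isConst_of_tendstoLocallyUniformly hnormal hC.le hf hp' hu hline 1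

/-- Let `f` be a normal holomorphic function on the open unit ball `𝔹ⁿ ⊂ ℂⁿ`, i.e.
`|Df(z)v|/(1+|f(z)|²) ≤ C·√((1−‖z‖²)‖v‖² + |⟨z,v⟩|²)/(1−‖z‖²)` for some `C > 0`.
If `p_j ∈ 𝔹ⁿ`, `r_j > 0` with `r_j/(1−‖p_j‖) → 0`, and `g_j(ζ) = f(p_j + r_j·ζ)`
converge uniformly on every compact subset of `ℂⁿ` to `g : ℂⁿ → ℂ`, then `g` is
constant. -/
theorem limit_of_rescalings_of_normal_const
    (n : ℕ) (hn : 1 ≤ n)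
    (f : EuclideanSpace ℂ (Fin n) → ℂ)
    (hf : DifferentiableOn ℂ f (ball (0 : EuclideanSpace ℂ (Fin n)) 1))
    (C : ℝ) (hC : 0 < C)
    (hnormal : ∀ z ∈ ball (0 : EuclideanSpace ℂ (Fin n)) 1,
      ∀ v : EuclideanSpace ℂ (Fin n),
        ‖fderiv ℂ f z v‖ / (1 + ‖f z‖ ^ 2) ≤
          C * Real.sqrt ((1 - ‖z‖ ^ 2) * ‖v‖ ^ 2 + ‖(inner ℂ z v : ℂ)‖ ^ 2) /
            (1 - ‖z‖ ^ 2))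
    (p : ℕ → EuclideanSpace ℂ (Fin n))
    (hp : ∀ j, p j ∈ ball (0 : EuclideanSpace ℂ (Fin n)) 1)
    (r : ℕ → ℝ) (hr : ∀ j, 0 < r j)
    (hratio : Tendsto (fun j => r j / (1 - ‖p j‖)) atTop (nhds 0))
    (g : EuclideanSpace ℂ (Fin n) → ℂ)
    (hconv : ∀ K : Set (EuclideanSpace ℂ (Fin n)), IsCompact K →
      TendstoUniformlyOn
        (fun j (ζ : EuclideanSpace ℂ (Fin n)) => f (p j + r j • ζ)) g atTop K) :
    ∃ c : ℂ, ∀ ζ : EuclideanSpace ℂ (Fin n), g ζ = c :=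
  limit_of_rescalings_of_normal_const_general n f hf C hC hnormal p hp r hratio g hconv
end

section
/- Let n ≥ 1 and let 𝔹ⁿ be the open unit ball of ℂⁿ. Let f : 𝔹ⁿ → ℂ be holomorphic and suppose there exist a sequence (p_j) in 𝔹ⁿ and positive reals (r_j) with r_j / (1 − ‖p_j‖) → 0 such that the functions ζ ↦ f(p_j + r_j·ζ) converge, uniformly on every compact subset of ℂⁿ, to a non-constant function g : ℂⁿ → ℂ. Then f is not normal: for every C > 0 there exist z ∈ 𝔹ⁿ and v ∈ ℂⁿ with |Df(z)v| / (1 + |f(z)|²) > C · √((1−‖z‖²)‖v‖² + |⟨z,v⟩|²)/(1−‖z‖²). -/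
open Filter Metric Set Topology

/-!
Choose `a, b` with `g a ≠ g b`. For large `j` the points `p_j + r_j • a`, `p_j + r_j • b` lie at
distance `r_j ‖b - a‖` from each other, well inside the ball (their distance to the sphere is
`≳ 1 - ‖p_j‖`), and `f` differs there by about `|g b - g a|`, while `f` stays bounded on
`p_j + r_j • K` for a fixed compact `K ∋ a, b`. The mean value theorem then gives a point `z` of the segment and a
vector `v` with `|Df(z) v| ≳ ‖v‖ / r_j`, whereas the Kobayashi length of `v` at `z` is at most
`‖v‖ / (1 - ‖z‖) ≲ ‖v‖ / (1 - ‖p_j‖)`. Since `r_j / (1 - ‖p_j‖) → 0`, no constant `C` works.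
-/

noncomputable def ballKobayashiMetric (𝕜 : Type*) {E : Type*} [RCLike 𝕜] [NormedAddCommGroup E]
    [InnerProductSpace 𝕜 E] (z v : E) : ℝ :=
  √((1 - ‖z‖ ^ 2) * ‖v‖ ^ 2 + ‖(inner 𝕜 z v : 𝕜)‖ ^ 2) / (1 - ‖z‖ ^ 2)

theorem ballKobayashiMetric_le_norm_div {𝕜 E : Type*} [RCLike 𝕜] [NormedAddCommGroup E]
    [InnerProductSpace 𝕜 E] {z : E} (hz : ‖z‖ < 1) (v : E) :
    ballKobayashiMetric 𝕜 z v ≤ ‖v‖ / (1 - ‖z‖) := by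
  have hinner : ‖(inner 𝕜 z v : 𝕜)‖ ≤ ‖z‖ * ‖v‖ := norm_inner_le_norm z v
  have hnum : √((1 - ‖z‖ ^ 2) * ‖v‖ ^ 2 + ‖(inner 𝕜 z v : 𝕜)‖ ^ 2) ≤ ‖v‖ :=
    Real.sqrt_le_iff.2 ⟨norm_nonneg v, by nlinarith [norm_nonneg (inner 𝕜 z v : 𝕜)]⟩
  have hz0 := norm_nonneg z
  calc ballKobayashiMetric 𝕜 z v ≤ ‖v‖ / (1 - ‖z‖ ^ 2) :=
        div_le_div_of_nonneg_right hnum (by nlinarith)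
    _ ≤ ‖v‖ / (1 - ‖z‖) :=
        div_le_div_of_nonneg_left (norm_nonneg v) (by linarith) (by nlinarith)

theorem exists_mem_segment_lt_norm_fderiv_apply {𝕜 E F : Type*} [NontriviallyNormedField 𝕜]
    [IsRCLikeNormedField 𝕜] [NormedAddCommGroup E] [NormedSpace ℝ E] [NormedSpace 𝕜 E]
    [NormedAddCommGroup F] [NormedSpace 𝕜 F] {f : E → F} {x y : E} {c : ℝ}
    (hf : ∀ w ∈ segment ℝ x y, DifferentiableAt 𝕜 f w) (hc : 0 ≤ c)
    (h : c * ‖y - x‖ < ‖f y - f x‖) :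
    ∃ w ∈ segment ℝ x y, ∃ v, c * ‖v‖ < ‖fderiv 𝕜 f w v‖ := by
  by_contra! hle
  refine h.not_ge ((convex_segment x y).norm_image_sub_le_of_norm_fderiv_le hf (fun w hw => ?_)
    (left_mem_segment ℝ x y) (right_mem_segment ℝ x y))
  exact ContinuousLinearMap.opNorm_le_bound _ hc (hle w hw)

theorem eventually_mul_lt_mul_of_tendsto_div_zero {ι : Type*} {l : Filter ι} {r s : ι → ℝ}
    (h : Tendsto (fun j => r j / s j) l (𝓝 0)) (hs : ∀ j, 0 < s j) (c : ℝ) {ε : ℝ}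
    (hε : 0 < ε) : ∀ᶠ j in l, c * r j < ε * s j := by
  have hc : Tendsto (fun j => c * (r j / s j)) l (𝓝 0) := by simpa using h.const_mul c
  filter_upwards [hc.eventually (gt_mem_nhds hε)] with j hj
  rwa [← mul_div_assoc, div_lt_iff₀ (hs j)] at hj

theorem TendstoUniformlyOn.exists_eventually_norm_le {ι α E : Type*} [TopologicalSpace α]
    [SeminormedAddCommGroup E] {F : ι → α → E} {g : α → E} {l : Filter ι} {K : Set α}
    (h : TendstoUniformlyOn F g l K) (hK : IsCompact K) (hF : ∃ᶠ j in l, ContinuousOn (F j) K) :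
    ∃ M, ∀ᶠ j in l, ∀ ζ ∈ K, ‖F j ζ‖ ≤ M := by
  obtain ⟨M, hM⟩ := hK.exists_bound_of_continuousOn (h.continuousOn hF)
  refine ⟨M + 1, ?_⟩
  filter_upwards [Metric.tendstoUniformlyOn_iff.1 h 1 one_pos] with j hj ζ hζ
  have hdist : ‖g ζ - F j ζ‖ < 1 := by simpa [dist_eq_norm] using hj ζ hζ
  linarith [norm_le_norm_add_norm_sub' (F j ζ) (g ζ), norm_sub_rev (F j ζ) (g ζ), hM ζ hζ]

theorem one_sub_norm_le_two_mul_one_sub_norm_add_smul {E : Type*} [SeminormedAddCommGroup E]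
    [NormedSpace ℝ E] {p ζ : E} {r R : ℝ} (hr : 0 ≤ r) (hζ : ‖ζ‖ ≤ R)
    (hrR : 2 * R * r ≤ 1 - ‖p‖) : 1 - ‖p‖ ≤ 2 * (1 - ‖p + r • ζ‖) := by
  have hnorm : ‖p + r • ζ‖ ≤ ‖p‖ + r * R := by
    calc ‖p + r • ζ‖ ≤ ‖p‖ + r * ‖ζ‖ := by
          simpa [norm_smul, abs_of_nonneg hr] using norm_add_le p (r • ζ)
      _ ≤ ‖p‖ + r * R := by gcongr
  linarith

theorem mapsTo_add_smul_closedBall_ball {E : Type*} [SeminormedAddCommGroup E]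
    [NormedSpace ℝ E] {p : E} {r R : ℝ} (hp : ‖p‖ < 1) (hr : 0 ≤ r)
    (hrR : 2 * R * r ≤ 1 - ‖p‖) :
    MapsTo (fun ζ => p + r • ζ) (closedBall 0 R) (ball 0 1) := fun ζ hζ => by
  have := one_sub_norm_le_two_mul_one_sub_norm_add_smul hr (mem_closedBall_zero_iff.1 hζ) hrR
  rw [mem_ball_zero_iff]
  linarith

theorem segment_add_smul_eq_image {𝕜 E : Type*} [CommRing 𝕜] [PartialOrder 𝕜] [IsOrderedRing 𝕜]
    [AddCommGroup E] [Module 𝕜 E] (p a b : E) (r : 𝕜) :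
    segment 𝕜 (p + r • a) (p + r • b) = (fun ζ => p + r • ζ) '' segment 𝕜 a b := by
  have := image_segment 𝕜 ((AffineEquiv.constVAdd 𝕜 E p).toAffineMap.comp
    (r • LinearMap.id : E →ₗ[𝕜] E).toAffineMap) a b
  simpa using this.symm

theorem exists_ballKobayashiMetric_lt_of_rescaled_oscillation {E : Type*}
    [NormedAddCommGroup E] [InnerProductSpace ℂ E] {f : E → ℂ}
    (hf : DifferentiableOn ℂ f (ball 0 1)) {p a b : E} {r R M C : ℝ} (hp : ‖p‖ < 1)
    (hr : 0 ≤ r) (hC : 0 ≤ C) (ha : ‖a‖ ≤ R) (hb : ‖b‖ ≤ R) (hrR : 2 * R * r ≤ 1 - ‖p‖)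
    (hM : ∀ ζ ∈ closedBall 0 R, ‖f (p + r • ζ)‖ ≤ M)
    (hosc : 2 * C * (1 + M ^ 2) * (r * ‖b - a‖) <
      (1 - ‖p‖) * ‖f (p + r • b) - f (p + r • a)‖) :
    ∃ z ∈ ball (0 : E) 1, ∃ v : E,
      C * ballKobayashiMetric ℂ z v < ‖fderiv ℂ f z v‖ / (1 + ‖f z‖ ^ 2) := by
  have hp0 : 0 < 1 - ‖p‖ := sub_pos.2 hp
  set c := 2 * C * (1 + M ^ 2) / (1 - ‖p‖)
  have hseg : segment ℝ (p + r • a) (p + r • b) ⊆ (fun ζ => p + r • ζ) '' closedBall 0 R := by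
    rw [segment_add_smul_eq_image]
    exact image_mono ((convex_closedBall 0 R).segment_subset
      (mem_closedBall_zero_iff.2 ha) (mem_closedBall_zero_iff.2 hb))
  have hmaps := mapsTo_add_smul_closedBall_ball hp hr hrR
  have hdiff : ∀ w ∈ segment ℝ (p + r • a) (p + r • b), DifferentiableAt ℂ f w := by
    intro w hw
    obtain ⟨ζ, hζ, rfl⟩ := hseg hw
    exact hf.differentiableAt (isOpen_ball.mem_nhds (hmaps hζ))
  have hslope : c * ‖p + r • b - (p + r • a)‖ < ‖f (p + r • b) - f (p + r • a)‖ := by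
    rw [add_sub_add_left_eq_sub, ← smul_sub, norm_smul, Real.norm_of_nonneg hr, div_mul_eq_mul_div,
      div_lt_iff₀ hp0]
    linarith
  obtain ⟨z, hz, v, hv⟩ := exists_mem_segment_lt_norm_fderiv_apply hdiff (by positivity) hslope
  obtain ⟨ζ, hζ, rfl⟩ := hseg hz
  have hz1 := mem_ball_zero_iff.1 (hmaps hζ)
  have hdist := one_sub_norm_le_two_mul_one_sub_norm_add_smul hr (mem_closedBall_zero_iff.1 hζ) hrR
  refine ⟨_, hmaps hζ, v, ?_⟩
  calc C * ballKobayashiMetric ℂ (p + r • ζ) v ≤ C * (‖v‖ / (1 - ‖p + r • ζ‖)) :=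
        mul_le_mul_of_nonneg_left (ballKobayashiMetric_le_norm_div hz1 v) hC
    _ ≤ C * (2 * ‖v‖ / (1 - ‖p‖)) := by
        refine mul_le_mul_of_nonneg_left ?_ hC
        rw [div_le_div_iff₀ (by linarith) hp0]
        nlinarith [norm_nonneg v]
    _ = c * ‖v‖ / (1 + M ^ 2) := by
        simp only [c]
        field_simp
    _ < ‖fderiv ℂ f (p + r • ζ) v‖ / (1 + M ^ 2) := by gcongr
    _ ≤ ‖fderiv ℂ f (p + r • ζ) v‖ / (1 + ‖f (p + r • ζ)‖ ^ 2) := by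
        gcongr
        exact hM ζ hζ

theorem not_normal_of_rescaling_limit_nonconstant_general
    (n : ℕ)
    (f : EuclideanSpace ℂ (Fin n) → ℂ)
    (hf : DifferentiableOn ℂ f (ball (0 : EuclideanSpace ℂ (Fin n)) 1))
    (p : ℕ → EuclideanSpace ℂ (Fin n))
    (hp : ∀ j, p j ∈ ball (0 : EuclideanSpace ℂ (Fin n)) 1)
    (r : ℕ → ℝ) (hr : ∀ j, 0 < r j)
    (hratio : Tendsto (fun j => r j / (1 - ‖p j‖)) atTop (nhds 0))
    (g : EuclideanSpace ℂ (Fin n) → ℂ)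
    (hconv : ∀ K : Set (EuclideanSpace ℂ (Fin n)), IsCompact K →
      TendstoUniformlyOn
        (fun j (ζ : EuclideanSpace ℂ (Fin n)) => f (p j + r j • ζ)) g atTop K)
    (hgnc : ∃ a b : EuclideanSpace ℂ (Fin n), g a ≠ g b) :
    ∀ C > (0 : ℝ), ∃ z ∈ ball (0 : EuclideanSpace ℂ (Fin n)) 1,
      ∃ v : EuclideanSpace ℂ (Fin n),
        C * Real.sqrt ((1 - ‖z‖ ^ 2) * ‖v‖ ^ 2 + ‖(inner ℂ z v : ℂ)‖ ^ 2) /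
            (1 - ‖z‖ ^ 2) <
          ‖fderiv ℂ f z v‖ / (1 + ‖f z‖ ^ 2) := by
  intro C hC
  obtain ⟨a, b, hab⟩ := hgnc
  set R := max ‖a‖ ‖b‖
  have hp1 : ∀ j, ‖p j‖ < 1 := fun j => mem_ball_zero_iff.1 (hp j)
  have hscale := eventually_mul_lt_mul_of_tendsto_div_zero hratio (fun j => sub_pos.2 (hp1 j))
    (2 * R) one_pos
  have hcont : ∀ᶠ j in atTop, ContinuousOn (fun ζ => f (p j + r j • ζ)) (closedBall 0 R) :=
    hscale.mono fun j hj => hf.continuousOn.comp (by fun_prop)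
      (mapsTo_add_smul_closedBall_ball (hp1 j) (hr j).le (by linarith [hj]))
  obtain ⟨M, hM⟩ := (hconv _ (isCompact_closedBall 0 R)).exists_eventually_norm_le
    (isCompact_closedBall 0 R) hcont.frequently
  have hlim : Tendsto (fun j => ‖f (p j + r j • b) - f (p j + r j • a)‖) atTop
      (𝓝 ‖g b - g a‖) :=
    (((hconv {b} isCompact_singleton).tendsto_at rfl).sub
      ((hconv {a} isCompact_singleton).tendsto_at rfl)).norm
  have hgab : 0 < ‖g b - g a‖ := norm_pos_iff.2 (sub_ne_zero.2 hab.symm)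
  obtain ⟨j, hjR, hjM, hjosc, hjsmall⟩ := (hscale.and (hM.and
    ((hlim.eventually (lt_mem_nhds (half_lt_self hgab))).and
      (eventually_mul_lt_mul_of_tendsto_div_zero hratio (fun j => sub_pos.2 (hp1 j))
        (4 * C * (1 + M ^ 2) * ‖b - a‖) hgab)))).exists
  obtain ⟨z, hz, v, hv⟩ := exists_ballKobayashiMetric_lt_of_rescaled_oscillation hf (hp1 j)
    (hr j).le hC.le (le_max_left _ _) (le_max_right _ _) (by linarith [hjR]) hjM
    (by nlinarith [hjosc, hjsmall, sub_pos.2 (hp1 j)])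
  exact ⟨z, hz, v, by simpa only [ballKobayashiMetric, mul_div_assoc] using hv⟩

/-- Let `f` be holomorphic on the open unit ball `𝔹ⁿ ⊂ ℂⁿ` and suppose there exist
`p_j ∈ 𝔹ⁿ` and `r_j > 0` with `r_j/(1−‖p_j‖) → 0` such that `ζ ↦ f(p_j + r_j·ζ)`
converge uniformly on every compact subset of `ℂⁿ` to a non-constant `g : ℂⁿ → ℂ`.
Then `f` is not normal: for every `C > 0` there are `z ∈ 𝔹ⁿ` and `v ∈ ℂⁿ` with
`|Df(z)v|/(1+|f(z)|²) > C·√((1−‖z‖²)‖v‖² + |⟨z,v⟩|²)/(1−‖z‖²)`. -/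
theorem not_normal_of_rescaling_limit_nonconstant
    (n : ℕ) (hn : 1 ≤ n)
    (f : EuclideanSpace ℂ (Fin n) → ℂ)
    (hf : DifferentiableOn ℂ f (ball (0 : EuclideanSpace ℂ (Fin n)) 1))
    (p : ℕ → EuclideanSpace ℂ (Fin n))
    (hp : ∀ j, p j ∈ ball (0 : EuclideanSpace ℂ (Fin n)) 1)
    (r : ℕ → ℝ) (hr : ∀ j, 0 < r j)
    (hratio : Tendsto (fun j => r j / (1 - ‖p j‖)) atTop (nhds 0))
    (g : EuclideanSpace ℂ (Fin n) → ℂ)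
    (hconv : ∀ K : Set (EuclideanSpace ℂ (Fin n)), IsCompact K →
      TendstoUniformlyOn
        (fun j (ζ : EuclideanSpace ℂ (Fin n)) => f (p j + r j • ζ)) g atTop K)
    (hgnc : ∃ a b : EuclideanSpace ℂ (Fin n), g a ≠ g b) :
    ∀ C > (0 : ℝ), ∃ z ∈ ball (0 : EuclideanSpace ℂ (Fin n)) 1,
      ∃ v : EuclideanSpace ℂ (Fin n),
        C * Real.sqrt ((1 - ‖z‖ ^ 2) * ‖v‖ ^ 2 + ‖(inner ℂ z v : ℂ)‖ ^ 2) /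
            (1 - ‖z‖ ^ 2) <
          ‖fderiv ℂ f z v‖ / (1 + ‖f z‖ ^ 2) :=
  not_normal_of_rescaling_limit_nonconstant_general n f hf p hp r hr hratio g hconv hgnc
end
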